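/- For every positive integer k, the graph K_{k,2k+2}^p := the join of an empty graph on k vertices with the disjoint union of 2k - 1 isolated vertices and a path P_3 on 3 vertices, contains every tree on 2k + 3 vertices as a subgraph. -/

import Mathlib

open SimpleGraph Finset

/-- The signless Laplacian matrix `Q(G) = D(G) + A(G)` over `ℝ`. -/
def signlessLaplacian {V : Type*} [Fintype V] [DecidableEq V] (G : SimpleGraph V)
    [DecidableRel G.Adj] : Matrix V V ℝ :=
  SimpleGraph.degMatrix ℝ G + G.adjMatrix ℝ

/-- `q` is the largest eigenvalue of the real matrix `M`. -/
def IsMaxEigenvalue {V : Type*} [Fintype V] [DecidableEq V] (M : Matrix V V ℝ) (q : ℝ) : Prop :=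
  Module.End.HasEigenvalue (Matrix.toLin' M) q ∧
    ∀ μ : ℝ, Module.End.HasEigenvalue (Matrix.toLin' M) μ → μ ≤ q

/-- `S_{n,k}`: the join of `K_k` with an empty graph on `n - k` vertices. -/
def Snk (n k : ℕ) : SimpleGraph (Fin n) where
  Adj u v := u ≠ v ∧ (u.val < k ∨ v.val < k)
  symm := ⟨fun u v ⟨h1, h2⟩ => ⟨h1.symm, h2.symm⟩⟩
  loopless := ⟨fun u ⟨h, _⟩ => h rfl⟩

instance (n k : ℕ) : DecidableRel (Snk n k).Adj := fun u v =>
  inferInstanceAs (Decidable (u ≠ v ∧ (u.val < k ∨ v.val < k)))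

/-- `S_{n,k}^+`: `S_{n,k}` plus one edge inside the independent set (between
vertices `k` and `k+1`). -/
def SnkPlus (n k : ℕ) : SimpleGraph (Fin n) where
  Adj u v := u ≠ v ∧ (u.val < k ∨ v.val < k ∨ (u.val ≤ k + 1 ∧ v.val ≤ k + 1))
  symm := ⟨fun u v ⟨h1, h2⟩ => ⟨h1.symm, by tauto⟩⟩
  loopless := ⟨fun u ⟨h, _⟩ => h rfl⟩

instance (n k : ℕ) : DecidableRel (SnkPlus n k).Adj := fun u v =>
  inferInstanceAs (Decidable (u ≠ v ∧ (u.val < k ∨ v.val < k ∨ (u.val ≤ k + 1 ∧ v.val ≤ k + 1))))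

/-- `T` is contained in `G` as a subgraph: there is an injective graph homomorphism. -/
def ContainsSub {α β : Type*} (T : SimpleGraph α) (G : SimpleGraph β) : Prop :=
  ∃ f : T →g G, Function.Injective f

/-- The join `G ∨ H` of two graphs: all edges between the two vertex sets are added. -/
def graphJoin {α β : Type*} (G : SimpleGraph α) (H : SimpleGraph β) :
    SimpleGraph (α ⊕ β) where
  Adj u v := match u, v with
    | Sum.inl a, Sum.inl b => G.Adj a b
    | Sum.inr a, Sum.inr b => H.Adj a b
    | _, _ => True
  symm := ⟨by rintro (a | a) (b | b) h <;> first | exact h.symm | trivial⟩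
  loopless := by refine ⟨?_⟩; rintro (a | a) h
                 · exact G.irrefl h
                 · exact H.irrefl h

/-- `(2k-1)K_1 ∪ P_3` on `2k+2` vertices: a path on the last three vertices. -/
def pathThreeGraph (k : ℕ) : SimpleGraph (Fin (2 * k + 2)) where
  Adj a b := a ≠ b ∧
    ((a.val = 2 * k - 1 ∧ b.val = 2 * k) ∨ (a.val = 2 * k ∧ b.val = 2 * k - 1) ∨
     (a.val = 2 * k ∧ b.val = 2 * k + 1) ∨ (a.val = 2 * k + 1 ∧ b.val = 2 * k))
  symm := ⟨fun a b ⟨h1, h2⟩ => ⟨h1.symm, by tauto⟩⟩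
  loopless := ⟨fun a ⟨h, _⟩ => h rfl⟩

/-!
A tree is bipartite; let `A` be its smaller colour class, so `|A| ≤ k + 1`. If `|A| ≤ k`, send `A`
to the `k` universal vertices and the other class, an independent set of at most `2k + 2`
vertices, injectively into the rest. If `|A| = k + 1`, the degrees over `A` sum to the `2k + 2`
edges, so some `a ∈ A` has degree at most `2`: send `a` to the middle of the `P_3`, its
neighbours to the ends, `A \ {a}` to the universal vertices and the remaining vertices to the
isolated ones.
-/

theorem Finset.exists_injective_extend_of_card_le {α β : Type*} [Fintype α] [Fintype β]
    [DecidableEq β] (hcard : Fintype.card α ≤ Fintype.card β) {s : Finset α} {f : α → β}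
    (hf : Set.InjOn f s) : ∃ g : α → β, Function.Injective g ∧ ∀ i ∈ s, g i = f i := by
  obtain ⟨t, hst, -, ht⟩ := exists_subsuperset_card_eq (subset_univ (s.image f))
    ((card_image_of_injOn hf).le.trans (card_le_univ s)) (by simpa using hcard)
  obtain ⟨g, hg⟩ := exists_equiv_extend_of_card_eq ht.symm hst hf
  exact ⟨fun i => g i, Subtype.val_injective.comp g.injective, hg⟩

namespace SimpleGraph

variable {α β γ : Type*}

theorem IsBipartite.exists_isBipartiteWith_compl [Fintype α] [DecidableEq α] {G : SimpleGraph α}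
    (h : G.IsBipartite) : ∃ A : Finset α, G.IsBipartiteWith ↑A ↑Aᶜ := by
  classical
  obtain ⟨s, t, hst⟩ := h.exists_isBipartiteWith
  refine ⟨s.toFinset, ?_⟩
  have hts : t ⊆ sᶜ := hst.disjoint.symm.subset_compl_right
  refine ⟨by simpa using disjoint_compl_right, fun v w hvw => ?_⟩
  simp only [Set.coe_toFinset, coe_compl]
  rcases hst.mem_of_adj hvw with ⟨hv, hw⟩ | ⟨hv, hw⟩
  · exact Or.inl ⟨hv, hts hw⟩
  · exact Or.inr ⟨hts hv, hw⟩

theorem IsBipartiteWith.isIndepSet_left {G : SimpleGraph α} {s t : Set α}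
    (h : G.IsBipartiteWith s t) : G.IsIndepSet s :=
  fun _ hu _ hv _ huv => h.disjoint.notMem_of_mem_left hv (h.mem_of_mem_adj hu huv)

theorem IsBipartiteWith.exists_degree_lt [Fintype α] {G : SimpleGraph α} [DecidableRel G.Adj]
    {s t : Finset α} (h : G.IsBipartiteWith ↑s ↑t) {d : ℕ} (hd : #G.edgeFinset < d * #s) :
    ∃ v ∈ s, G.degree v < d := by
  apply exists_lt_of_sum_lt
  rwa [isBipartiteWith_sum_degrees_eq_card_edges h, sum_const, smul_eq_mul, mul_comm]

theorem containsSub_graphJoin_bot {T : SimpleGraph α} {K : SimpleGraph β} {I : Set α}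
    (hI : T.IsIndepSet I) (e : I ↪ γ) (hK : ContainsSub (T.induce Iᶜ) K) :
    ContainsSub T (graphJoin (⊥ : SimpleGraph γ) K) := by
  classical
  obtain ⟨g, hg⟩ := hK
  let σ := Equiv.Set.sumCompl I
  refine ⟨⟨Sum.map e g ∘ σ.symm, fun {u v} huv => ?_⟩,
    (Sum.map_injective.2 ⟨e.injective, hg⟩).comp σ.symm.injective⟩
  obtain ⟨x, rfl⟩ := σ.surjective u
  obtain ⟨y, rfl⟩ := σ.surjective v
  rcases x with x | x <;> rcases y with y | y
  · exact (hI x.2 y.2 huv.ne huv).elim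
  all_goals simp only [Function.comp_apply, Equiv.symm_apply_apply, Sum.map_inl, Sum.map_inr]
  all_goals first | trivial | exact g.map_rel huv

theorem containsSub_pathThreeGraph {k : ℕ} (hk : 0 < k) [Fintype β] {G : SimpleGraph β}
    (hcard : Fintype.card β ≤ 2 * k + 2) {a b c : β} (hab : a ≠ b) (hac : a ≠ c) (hbc : b ≠ c)
    (hG : G.edgeSet ⊆ {s(a, b), s(a, c)}) : ContainsSub G (pathThreeGraph k) := by
  classical
  let mid : Fin (2 * k + 2) := ⟨2 * k, by omega⟩
  let left : Fin (2 * k + 2) := ⟨2 * k - 1, by omega⟩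
  let right : Fin (2 * k + 2) := ⟨2 * k + 1, by omega⟩
  have h_left : (pathThreeGraph k).Adj mid left := by
    simp [pathThreeGraph, mid, left, Fin.ext_iff]
    omega
  have h_right : (pathThreeGraph k).Adj mid right := by simp [pathThreeGraph, mid, right]
  let φ : β → Fin (2 * k + 2) := fun v => if v = a then mid else if v = b then left else right
  have ha : φ a = mid := if_pos rfl
  have hb : φ b = left := by simp [φ, hab.symm]
  have hc : φ c = right := by simp [φ, hac.symm, hbc.symm]
  have hφ : Set.InjOn φ ↑({a, b, c} : Finset β) := by
    have : left ≠ right := by simp [left, right, Fin.ext_iff]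
    have := h_left.ne
    have := h_right.ne
    intro u hu v hv huv
    simp only [coe_insert, coe_singleton, Set.mem_insert_iff, Set.mem_singleton_iff] at hu hv
    rcases hu with rfl | rfl | rfl <;> rcases hv with rfl | rfl | rfl <;> simp_all
  obtain ⟨f, hf, hfφ⟩ := exists_injective_extend_of_card_le (by simpa) hφ
  refine ⟨⟨f, fun {u v} huv => ?_⟩, hf⟩
  have huv' : s(u, v) ∈ G.edgeSet := huv
  rcases hG huv' with h | h <;> rcases Sym2.eq_iff.1 h with ⟨rfl, rfl⟩ | ⟨rfl, rfl⟩ <;>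
    simp [hfφ, ha, hb, hc, h_left, h_right, h_left.symm, h_right.symm]

theorem IsBipartiteWith.containsSub_graphJoin_bot_of_card_le [Fintype α] [DecidableEq α]
    [Fintype β] [Fintype γ] {T : SimpleGraph α} {K : SimpleGraph β} {A : Finset α}
    (h : T.IsBipartiteWith ↑A ↑Aᶜ) (hA : #A ≤ Fintype.card γ) (hB : #Aᶜ ≤ Fintype.card β) :
    ContainsSub T (graphJoin (⊥ : SimpleGraph γ) K) := by
  obtain ⟨e⟩ := Function.Embedding.nonempty_of_card_le (α := (A : Set α)) (β := γ)
    (by simpa only [← Set.toFinset_card, toFinset_coe])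
  obtain ⟨g⟩ := Function.Embedding.nonempty_of_card_le (α := ((A : Set α)ᶜ : Set α)) (β := β)
    (by simpa only [← Set.toFinset_card, Set.toFinset_compl, toFinset_coe])
  refine containsSub_graphJoin_bot h.isIndepSet_left e ⟨⟨g, fun {u v} huv => ?_⟩, g.injective⟩
  have hB : T.IsIndepSet ↑Aᶜ := h.symm.isIndepSet_left
  exact (hB (by simp) (by simp) (Subtype.coe_injective.ne huv.ne) huv).elim

theorem IsBipartiteWith.containsSub_graphJoin_bot_pathThreeGraph_of_degree_le_two [Fintype α]
    [DecidableEq α] {T : SimpleGraph α} [DecidableRel T.Adj] {A : Finset α}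
    (h : T.IsBipartiteWith ↑A ↑Aᶜ) {k : ℕ} (hk : 0 < k) {a : α} (ha : a ∈ A)
    (hdeg : T.degree a ≤ 2) (hA : #A ≤ k + 1) (hB₂ : 2 ≤ #Aᶜ) (hB : #Aᶜ ≤ 2 * k + 1) :
    ContainsSub T (graphJoin (⊥ : SimpleGraph (Fin k)) (pathThreeGraph k)) := by
  obtain ⟨S, hNS, hSB, hS⟩ :=
    exists_subsuperset_card_eq (isBipartiteWith_neighborFinset_subset h ha) hdeg hB₂
  obtain ⟨b, c, hbc, rfl⟩ := card_eq_two.1 hS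
  have hb : b ∉ A := mem_compl.1 (hSB (by simp))
  have hc : c ∉ A := mem_compl.1 (hSB (by simp))
  have hI : T.IsIndepSet ↑(A.erase a) :=
    Set.Pairwise.mono (coe_subset.2 (erase_subset a A)) h.isIndepSet_left
  obtain ⟨e⟩ := Function.Embedding.nonempty_of_card_le (α := ↑(A.erase a : Set α)) (β := Fin k)
    (by
      simp only [← Set.toFinset_card, toFinset_coe, card_erase_of_mem ha, Fintype.card_fin]
      omega)
  let a' : ((A.erase a : Set α)ᶜ : Set α) := ⟨a, by simp⟩
  let b' : ((A.erase a : Set α)ᶜ : Set α) := ⟨b, by simp [hb]⟩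
  let c' : ((A.erase a : Set α)ᶜ : Set α) := ⟨c, by simp [hc]⟩
  have hstar : ∀ u v : ((A.erase a : Set α)ᶜ : Set α), T.Adj u v → (u : α) ∈ A →
      s(u, v) = s(a', b') ∨ s(u, v) = s(a', c') := by
    intro u v huv hu
    have hua : (u : α) = a := by simpa [hu] using u.2
    rw [hua] at huv
    have hv : (v : α) ∈ ({b, c} : Finset α) := hNS (by simpa using huv)
    simp only [mem_insert, mem_singleton] at hv
    rcases hv with hv | hv
    · exact Or.inl (by rw [(Subtype.ext hua : u = a'), (Subtype.ext hv : v = b')])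
    · exact Or.inr (by rw [(Subtype.ext hua : u = a'), (Subtype.ext hv : v = c')])
  refine containsSub_graphJoin_bot hI e (containsSub_pathThreeGraph hk (a := a') (b := b')
    (c := c') ?_ ?_ ?_ ?_ ?_)
  · simp only [← Set.toFinset_card, Set.toFinset_compl, toFinset_coe, card_compl,
      card_erase_of_mem ha]
    have := card_add_card_compl A
    have := card_pos.2 ⟨a, ha⟩
    omega
  · exact ne_of_apply_ne Subtype.val (ne_of_mem_of_not_mem ha hb)
  · exact ne_of_apply_ne Subtype.val (ne_of_mem_of_not_mem ha hc)
  · exact ne_of_apply_ne Subtype.val hbc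
  · rintro ⟨u, v⟩ huv
    rcases h.mem_of_adj huv with ⟨hu, -⟩ | ⟨-, hv⟩
    · exact hstar u v huv hu
    · have := hstar v u huv.symm hv
      rwa [Sym2.eq_swap] at this

end SimpleGraph

theorem stmt_8 (k : ℕ) (hk : 0 < k) {α : Type*} [Fintype α]
    (T : SimpleGraph α) (hT : T.IsTree) (hcard : Fintype.card α = 2 * k + 3) :
    ContainsSub T (graphJoin (⊥ : SimpleGraph (Fin k)) (pathThreeGraph k)) := by
  classical
  obtain ⟨A, hA⟩ := hT.isBipartite.exists_isBipartiteWith_compl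
  have hE : #T.edgeFinset = 2 * k + 2 := by have := hT.card_edgeFinset; omega
  wlog hAB : #A ≤ #Aᶜ generalizing A
  · exact this Aᶜ (by rwa [compl_compl, isBipartiteWith_comm]) (by rw [compl_compl]; omega)
  have hsplit : #A + #Aᶜ = 2 * k + 3 := by rw [card_add_card_compl, hcard]
  have hApos : 0 < #A := card_pos.2 <| nonempty_of_sum_ne_zero (f := fun v => T.degree v) (by
    rw [isBipartiteWith_sum_degrees_eq_card_edges hA, hE]; omega)
  rcases (by omega : #A ≤ k ∨ #A = k + 1) with hsmall | hbig
  · exact hA.containsSub_graphJoin_bot_of_card_le (by simpa) (by rw [Fintype.card_fin]; omega)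
  · obtain ⟨a, ha, hdeg⟩ := hA.exists_degree_lt (d := 3) (by omega)
    exact hA.containsSub_graphJoin_bot_pathThreeGraph_of_degree_le_two hk ha (by omega)
      (by omega) (by omega) (by omega)
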